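/- For f ∈ ℓ^p_A \ {0} and p ∈ (1,∞), let f̂ be the metric projection of f onto [Sf], the closed span of {S^k f : k ≥ 1} where S is the shift (Sf)(z) = z f(z). Then J := f − f̂ is p-inner, meaning J ≠ 0 and J ⊥_p S^n J for every n ≥ 1. Conversely, every p-inner function J satisfies Ĵ = 0, i.e., J = J − Ĵ. -/

import Mathlib

/-- The `ℓ^p` norm of a coefficient sequence. -/
noncomputable def pnorm (p : ℝ) (a : ℕ → ℂ) : ℝ := (∑' k, ‖a k‖ ^ p) ^ (1/p)

/-- Membership in `ℓ^p_A`, via the coefficient sequence. -/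
def Memlp (p : ℝ) (a : ℕ → ℂ) : Prop := Summable fun k => ‖a k‖ ^ p

/-- Coefficients of `S^n f`, where `S` is the shift `(Sf)(z) = z f(z)`. -/
def shiftn (n : ℕ) (a : ℕ → ℂ) : ℕ → ℂ := fun m => if m < n then 0 else a (m - n)

/-- Birkhoff-James orthogonality `a ⊥_p b` in `ℓ^p_A`. -/
def orth (p : ℝ) (a b : ℕ → ℂ) : Prop :=
  ∀ β : ℂ, pnorm p a ≤ pnorm p fun k => a k + β * b k

/-- `g` belongs to `[Sf]`, the closed span of `{S^k f : k ≥ 1}` in `ℓ^p_A`. -/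
def inSpanSf (p : ℝ) (f g : ℕ → ℂ) : Prop :=
  ∀ ε > 0, ∃ (N : ℕ) (c : ℕ → ℂ),
    pnorm p (fun m => g m - ∑ k ∈ Finset.range N, c k * shiftn (k + 1) f m) < ε

open Finset Filter Complex Topology

variable {p : ℝ}

lemma summable_rpow_of_le (hp : 0 < p) {x : ℕ → ℂ} {u : ℕ → ℝ}
    (h : ∀ k, ‖x k‖ ≤ u k) (hu : Summable fun k => u k ^ p) :
    Summable fun k => ‖x k‖ ^ p :=
  Summable.of_nonneg_of_le (fun k => by positivity)
    (fun k => Real.rpow_le_rpow (norm_nonneg _) (h k) hp.le) hu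

lemma summable_norm_add_rpow (hp : 1 < p) {a b : ℕ → ℂ}
    (ha : Memlp p a) (hb : Memlp p b) :
    Summable fun k => (‖a k‖ + ‖b k‖) ^ p :=
  Real.summable_Lp_add_of_nonneg hp.le (fun _ => norm_nonneg _) (fun _ => norm_nonneg _) ha hb

lemma memlp_add (hp : 1 < p) {a b : ℕ → ℂ} (ha : Memlp p a) (hb : Memlp p b) :
    Memlp p (fun k => a k + b k) :=
  summable_rpow_of_le (lt_trans one_pos hp) (fun k => norm_add_le _ _)
    (summable_norm_add_rpow hp ha hb)

lemma memlp_sub (hp : 1 < p) {a b : ℕ → ℂ} (ha : Memlp p a) (hb : Memlp p b) :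
    Memlp p (fun k => a k - b k) :=
  summable_rpow_of_le (lt_trans one_pos hp) (fun k => norm_sub_le _ _)
    (summable_norm_add_rpow hp ha hb)

lemma memlp_smul {b : ℕ → ℂ} (β : ℂ) (hb : Memlp p b) :
    Memlp p (fun k => β * b k) := by
  have : ∀ k, ‖β * b k‖ ^ p = ‖β‖ ^ p * ‖b k‖ ^ p := fun k => by
    rw [norm_mul, Real.mul_rpow (norm_nonneg _) (norm_nonneg _)]
  exact Summable.congr (hb.mul_left (‖β‖ ^ p)) (fun k => (this k).symm)

lemma pnorm_nonneg (p : ℝ) (a : ℕ → ℂ) : 0 ≤ pnorm p a :=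
  Real.rpow_nonneg (tsum_nonneg fun k => by positivity) _

lemma pnorm_congr {a b : ℕ → ℂ} (h : ∀ k, a k = b k) : pnorm p a = pnorm p b := by
  unfold pnorm; congr 1; exact tsum_congr fun k => by rw [h k]

lemma pnorm_le_pnorm (hp : 0 < p) {a b : ℕ → ℂ}
    (h : ∑' k, ‖a k‖ ^ p ≤ ∑' k, ‖b k‖ ^ p) : pnorm p a ≤ pnorm p b :=
  Real.rpow_le_rpow (tsum_nonneg fun k => by positivity) h (by positivity)

lemma tsum_le_tsum_of_pnorm_le (hp : 0 < p) {a b : ℕ → ℂ}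
    (h : pnorm p a ≤ pnorm p b) : ∑' k, ‖a k‖ ^ p ≤ ∑' k, ‖b k‖ ^ p := by
  have h2 := Real.rpow_le_rpow (pnorm_nonneg p a) h hp.le
  unfold pnorm at h2
  rw [← Real.rpow_mul (tsum_nonneg fun k => by positivity),
    ← Real.rpow_mul (tsum_nonneg fun k => by positivity),
    one_div, inv_mul_cancel₀ hp.ne', Real.rpow_one, Real.rpow_one] at h2
  exact h2

lemma pnorm_triangle (hp : 1 < p) {x a b : ℕ → ℂ} (hptw : ∀ k, x k = a k + b k)
    (ha : Memlp p a) (hb : Memlp p b) : pnorm p x ≤ pnorm p a + pnorm p b := by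
  have hp0 : 0 < p := lt_trans one_pos hp
  have H := Real.Lp_add_le_tsum_of_nonneg (f := fun k => ‖a k‖) (g := fun k => ‖b k‖)
    hp.le (fun _ => norm_nonneg _) (fun _ => norm_nonneg _) ha hb
  have h1 : ∑' k, ‖x k‖ ^ p ≤ ∑' k, (‖a k‖ + ‖b k‖) ^ p := by
    refine Summable.tsum_le_tsum (fun k => ?_) (summable_rpow_of_le hp0
      (fun k => by rw [hptw k]; exact norm_add_le _ _) H.1) H.1
    exact Real.rpow_le_rpow (norm_nonneg _) (by rw [hptw k]; exact norm_add_le _ _) hp0.le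
  calc pnorm p x ≤ (∑' k, (‖a k‖ + ‖b k‖) ^ p) ^ (1/p) :=
        Real.rpow_le_rpow (tsum_nonneg fun k => by positivity) h1 (by positivity)
    _ ≤ pnorm p a + pnorm p b := H.2

lemma pnorm_smul (hp : 0 < p) (β : ℂ) (b : ℕ → ℂ) :
    pnorm p (fun k => β * b k) = ‖β‖ * pnorm p b := by
  unfold pnorm
  have h1 : ∀ k, ‖β * b k‖ ^ p = ‖β‖ ^ p * ‖b k‖ ^ p := fun k => by
    rw [norm_mul, Real.mul_rpow (norm_nonneg _) (norm_nonneg _)]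
  rw [tsum_congr h1, tsum_mul_left,
    Real.mul_rpow (by positivity) (tsum_nonneg fun k => by positivity),
    ← Real.rpow_mul (norm_nonneg _), mul_one_div, div_self hp.ne', Real.rpow_one]
lemma shiftn_zero (a : ℕ → ℂ) : shiftn 0 a = a := by
  funext m; simp [shiftn]

lemma shiftn_shiftn (n j : ℕ) (a : ℕ → ℂ) : shiftn n (shiftn j a) = shiftn (n + j) a := by
  funext m
  simp only [shiftn]
  by_cases h1 : m < n
  · rw [if_pos h1, if_pos (by omega)]
  · rw [if_neg h1]
    by_cases h2 : m < n + j
    · rw [if_pos (by omega), if_pos h2]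
    · rw [if_neg (by omega), if_neg h2]
      congr 1
      omega

lemma shiftn_sub (n : ℕ) (a b : ℕ → ℂ) (m : ℕ) :
    shiftn n (fun k => a k - b k) m = shiftn n a m - shiftn n b m := by
  simp only [shiftn]
  split_ifs <;> simp

lemma memlp_shiftn (n : ℕ) {a : ℕ → ℂ} (ha : Memlp p a) : Memlp p (shiftn n a) := by
  have h : (fun i => ‖shiftn n a (i + n)‖ ^ p) = fun i => ‖a i‖ ^ p := by
    funext i; simp [shiftn]
  exact (summable_nat_add_iff n).mp (by rw [h]; exact ha)

lemma tsum_shiftn (hp : 0 < p) (n : ℕ) {a : ℕ → ℂ} (ha : Memlp p a) :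
    ∑' m, ‖shiftn n a m‖ ^ p = ∑' m, ‖a m‖ ^ p := by
  have hs : Memlp p (shiftn n a) := memlp_shiftn n ha
  have H := Summable.sum_add_tsum_nat_add (f := fun m => ‖shiftn n a m‖ ^ p) n hs
  have h0 : ∑ i ∈ Finset.range n, ‖shiftn n a i‖ ^ p = 0 := by
    refine Finset.sum_eq_zero fun i hi => ?_
    rw [shiftn]
    simp only [if_pos (Finset.mem_range.mp hi), norm_zero]
    exact Real.zero_rpow hp.ne'
  have h1 : (fun i => ‖shiftn n a (i + n)‖ ^ p) = fun i => ‖a i‖ ^ p := by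
    funext i; simp [shiftn]
  rw [h0, zero_add, h1] at H
  exact H.symm

lemma pnorm_shiftn (hp : 0 < p) (n : ℕ) {a : ℕ → ℂ} (ha : Memlp p a) :
    pnorm p (shiftn n a) = pnorm p a := by
  unfold pnorm; rw [tsum_shiftn hp n ha]

/-- finite linear combination of shifts -/
noncomputable def combo (f : ℕ → ℂ) (N : ℕ) (c : ℕ → ℂ) : ℕ → ℂ :=
  fun m => ∑ k ∈ Finset.range N, c k * shiftn (k + 1) f m

def IsCombo (f g : ℕ → ℂ) : Prop := ∃ N c, g = combo f N c

lemma memlp_combo (hp : 1 < p) {f : ℕ → ℂ} (hf : Memlp p f) (N : ℕ) (c : ℕ → ℂ) :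
    Memlp p (combo f N c) := by
  induction N with
  | zero =>
    have : (fun k => ‖combo f 0 c k‖ ^ p) = fun _ => (0:ℝ) := by
      funext k; simp [combo, Real.zero_rpow (by positivity : p ≠ 0)]
    rw [Memlp, this]; exact summable_zero
  | succ N ih =>
    have h : combo f (N+1) c = fun m => combo f N c m + c N * shiftn (N+1) f m := by
      funext m; simp [combo, Finset.sum_range_succ]
    rw [h]
    exact memlp_add hp ih (memlp_smul _ (memlp_shiftn _ hf))

lemma shiftn_combo (j : ℕ) (f : ℕ → ℂ) (N : ℕ) (c : ℕ → ℂ) :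
    shiftn j (combo f N c) = fun m => ∑ k ∈ Finset.range N, c k * shiftn (j + (k + 1)) f m := by
  funext m
  simp only [shiftn, combo]
  by_cases h1 : m < j
  · rw [if_pos h1]
    symm
    refine Finset.sum_eq_zero fun k _ => ?_
    rw [if_pos (by omega), mul_zero]
  · rw [if_neg h1]
    refine Finset.sum_congr rfl fun k _ => ?_
    congr 1
    by_cases h2 : m < j + (k + 1)
    · rw [if_pos (by omega), if_pos h2]
    · rw [if_neg (by omega), if_neg h2]
      congr 1
      omega

lemma isCombo_shift_one {f g : ℕ → ℂ} (h : IsCombo f g) : IsCombo f (shiftn 1 g) := by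
  obtain ⟨N, c, rfl⟩ := h
  refine ⟨N + 1, fun j => if j = 0 then 0 else c (j - 1), ?_⟩
  funext m
  rw [congrFun (shiftn_combo 1 f N c) m]
  simp only [combo]
  rw [Finset.sum_range_succ' (fun k => (if k = 0 then (0:ℂ) else c (k - 1)) * shiftn (k + 1) f m) N]
  rw [if_pos rfl, zero_mul, add_zero]
  refine (Finset.sum_congr rfl fun k _ => ?_).symm
  rw [if_neg k.succ_ne_zero, Nat.add_sub_cancel]
  congr 2
  omega

lemma isCombo_shiftn {f g : ℕ → ℂ} (n : ℕ) (h : IsCombo f g) : IsCombo f (shiftn n g) := by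
  induction n with
  | zero => rw [shiftn_zero]; exact h
  | succ n ih =>
    have : shiftn (n + 1) g = shiftn 1 (shiftn n g) := by
      rw [shiftn_shiftn, Nat.add_comm]
    rw [this]
    exact isCombo_shift_one ih

lemma isCombo_zero (f : ℕ → ℂ) : IsCombo f 0 :=
  ⟨0, 0, by funext m; simp [combo]⟩

lemma isCombo_shift_self {f : ℕ → ℂ} {n : ℕ} (hn : 1 ≤ n) : IsCombo f (shiftn n f) := by
  have h1 : IsCombo f (shiftn 1 f) := by
    refine ⟨1, fun _ => 1, ?_⟩
    funext m
    simp [combo]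
  have := isCombo_shiftn (n - 1) h1
  rwa [shiftn_shiftn, Nat.sub_add_cancel hn] at this

lemma isCombo_add_smul {f g₁ g₂ : ℕ → ℂ} (β : ℂ) (h1 : IsCombo f g₁) (h2 : IsCombo f g₂) :
    IsCombo f (fun m => g₁ m + β * g₂ m) := by
  obtain ⟨N₁, c₁, rfl⟩ := h1
  obtain ⟨N₂, c₂, rfl⟩ := h2
  refine ⟨max N₁ N₂, fun k => (if k < N₁ then c₁ k else 0) + β * (if k < N₂ then c₂ k else 0), ?_⟩
  funext m
  simp only [combo, add_mul, Finset.sum_add_distrib]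
  congr 1
  · calc ∑ k ∈ Finset.range N₁, c₁ k * shiftn (k + 1) f m
        = ∑ k ∈ Finset.range N₁, (if k < N₁ then c₁ k else 0) * shiftn (k + 1) f m :=
          Finset.sum_congr rfl fun k hk => by rw [if_pos (Finset.mem_range.mp hk)]
      _ = ∑ k ∈ Finset.range (max N₁ N₂), (if k < N₁ then c₁ k else 0) * shiftn (k + 1) f m :=
          Finset.sum_subset (Finset.range_subset_range.mpr (le_max_left N₁ N₂))
            (fun k _ hk => by rw [if_neg (by simpa using hk), zero_mul])
  · have hre : ∀ k ∈ Finset.range (max N₁ N₂),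
        (β * if k < N₂ then c₂ k else 0) * shiftn (k + 1) f m
          = β * ((if k < N₂ then c₂ k else 0) * shiftn (k + 1) f m) := fun k _ => by ring
    rw [Finset.sum_congr rfl hre, ← Finset.mul_sum]
    congr 1
    calc ∑ k ∈ Finset.range N₂, c₂ k * shiftn (k + 1) f m
        = ∑ k ∈ Finset.range N₂, (if k < N₂ then c₂ k else 0) * shiftn (k + 1) f m :=
          Finset.sum_congr rfl fun k hk => by rw [if_pos (Finset.mem_range.mp hk)]
      _ = ∑ k ∈ Finset.range (max N₁ N₂), (if k < N₂ then c₂ k else 0) * shiftn (k + 1) f m :=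
          Finset.sum_subset (Finset.range_subset_range.mpr (le_max_right N₁ N₂))
            (fun k _ hk => by rw [if_neg (by simpa using hk), zero_mul])

/-- coefficient of the duality map -/
noncomputable def dcoef (p : ℝ) (z : ℂ) : ℂ := (‖z‖ ^ (p - 2) : ℝ) * (starRingEnd ℂ) z

lemma re_dcoef_mul (p : ℝ) (z w : ℂ) :
    (dcoef p z * w).re = ‖z‖ ^ (p - 2) * ((starRingEnd ℂ) z * w).re := by
  rw [dcoef, mul_assoc]
  simp [Complex.mul_re]

lemma norm_dcoef_mul (hp : 1 < p) (z w : ℂ) :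
    ‖dcoef p z * w‖ = ‖z‖ ^ (p - 1) * ‖w‖ := by
  rcases eq_or_ne z 0 with rfl | hz
  · simp [dcoef, Real.zero_rpow (show p - 1 ≠ 0 by intro h; linarith [sub_eq_zero.mp h])]
  · rw [norm_mul, dcoef, norm_mul, Complex.norm_real, Real.norm_eq_abs,
      _root_.abs_of_nonneg (Real.rpow_nonneg (norm_nonneg z) _), RCLike.norm_conj,
      show p - 1 = (p - 2) + 1 by ring, Real.rpow_add_one (norm_ne_zero_iff.mpr hz)]

/-- the tangent-line inequality: key pointwise estimate -/
lemma key_lower (hp : 1 < p) (z w : ℂ) :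
    ‖z‖ ^ p + p * (dcoef p z * w).re ≤ ‖z + w‖ ^ p := by
  rw [re_dcoef_mul]
  rcases eq_or_ne z 0 with rfl | hz
  · simp only [map_zero, zero_mul, Complex.zero_re, mul_zero, norm_zero, zero_add,
      Real.zero_rpow (show p ≠ 0 by positivity), add_zero]
    exact Real.rpow_nonneg (norm_nonneg w) p
  · set r := ‖z‖ with hr_def
    have hr : 0 < r := norm_pos_iff.mpr hz
    set s := ‖z + w‖ with hs_def
    have hs : 0 ≤ s := norm_nonneg _
    -- Step A : r^p + p * r^(p-1) * (s - r) ≤ s^p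
    have hA : r ^ p + p * (r ^ (p - 1) * (s - r)) ≤ s ^ p := by
      have hb := one_add_mul_self_le_rpow_one_add
        (show -1 ≤ s / r - 1 by have := div_nonneg hs hr.le; linarith) hp.le
      have h2 : (1 + (s / r - 1)) ^ p = s ^ p / r ^ p := by
        rw [show 1 + (s / r - 1) = s / r by ring, Real.div_rpow hs hr.le]
      rw [h2] at hb
      have hrp : (0:ℝ) < r ^ p := Real.rpow_pos_of_pos hr p
      have hb2 : (1 + p * (s / r - 1)) * r ^ p ≤ s ^ p := by
        calc (1 + p * (s / r - 1)) * r ^ p ≤ (s ^ p / r ^ p) * r ^ p := by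
              exact mul_le_mul_of_nonneg_right hb hrp.le
          _ = s ^ p := by field_simp
      have hr1 : r ^ (p - 1) = r ^ p / r := Real.rpow_sub_one hr.ne' p
      have expand : (1 + p * (s / r - 1)) * r ^ p
          = r ^ p + p * (r ^ (p - 1) * (s - r)) := by
        rw [hr1]
        field_simp
      linarith [hb2, expand ▸ hb2]
    -- Step B : Re(conj z * w) ≤ r * (s - r)
    have hB : ((starRingEnd ℂ) z * w).re ≤ r * (s - r) := by
      have h1 : ((starRingEnd ℂ) z * (z + w)).re ≤ r * s := by
        calc ((starRingEnd ℂ) z * (z + w)).re ≤ ‖(starRingEnd ℂ) z * (z + w)‖ :=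
              Complex.re_le_norm _
          _ = r * s := by rw [norm_mul, RCLike.norm_conj]
      have h2 : ((starRingEnd ℂ) z * z).re = r * r := by
        rw [show (starRingEnd ℂ) z * z = ((Complex.normSq z : ℝ) : ℂ) by
            rw [mul_comm]; exact Complex.mul_conj z]
        rw [Complex.ofReal_re, Complex.normSq_eq_norm_sq]
        rw [hr_def]
        ring
      have h3 : ((starRingEnd ℂ) z * (z + w)).re
          = ((starRingEnd ℂ) z * z).re + ((starRingEnd ℂ) z * w).re := by
        rw [mul_add, Complex.add_re]
      nlinarith
    -- combine
    have hcomb : r ^ (p - 2) * ((starRingEnd ℂ) z * w).re ≤ r ^ (p - 1) * (s - r) := by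
      have hrp2 : (0:ℝ) < r ^ (p - 2) := Real.rpow_pos_of_pos hr _
      have h4 : r ^ (p - 2) * ((starRingEnd ℂ) z * w).re ≤ r ^ (p - 2) * (r * (s - r)) :=
        mul_le_mul_of_nonneg_left hB hrp2.le
      calc r ^ (p - 2) * ((starRingEnd ℂ) z * w).re ≤ r ^ (p - 2) * r * (s - r) := by
            rw [mul_assoc]; exact h4
        _ = r ^ (p - 1) * (s - r) := by
            rw [show p - 1 = (p - 2) + 1 by ring, Real.rpow_add_one hr.ne']
    have hp0 : (0:ℝ) < p := by linarith
    nlinarith [hA, mul_le_mul_of_nonneg_left hcomb hp0.le]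

noncomputable def Dfun (p : ℝ) (a b : ℕ → ℂ) : ℂ := ∑' k, dcoef p (a k) * b k

lemma rpow_pred_mul_self {x : ℝ} (hp : 1 < p) (hx : 0 ≤ x) : x ^ (p - 1) * x = x ^ p := by
  rcases eq_or_lt_of_le hx with h | h
  · rw [← h, Real.zero_rpow (show p - 1 ≠ 0 by intro h'; linarith [sub_eq_zero.mp h']),
      Real.zero_rpow (show p ≠ 0 by positivity), zero_mul]
  · rw [← Real.rpow_add_one h.ne' (p - 1), sub_add_cancel]

lemma summable_mul_norms (hp : 1 < p) {u b : ℕ → ℂ} {v : ℕ → ℝ} (hv : ∀ k, 0 ≤ v k)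
    (hvb : Summable fun k => v k ^ p) (hb : Memlp p b)
    (hu : ∀ k, ‖u k‖ ≤ v k ^ (p - 1) * ‖b k‖) : Summable u := by
  refine Summable.of_norm (Summable.of_nonneg_of_le (fun k => norm_nonneg _)
    (fun k => (hu k).trans ?_) (hvb.add hb))
  rcases le_total (‖b k‖) (v k) with h | h
  · calc v k ^ (p - 1) * ‖b k‖ ≤ v k ^ (p - 1) * v k :=
        mul_le_mul_of_nonneg_left h (Real.rpow_nonneg (hv k) _)
      _ = v k ^ p := rpow_pred_mul_self hp (hv k)
      _ ≤ v k ^ p + ‖b k‖ ^ p := le_add_of_nonneg_right (by positivity)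
  · calc v k ^ (p - 1) * ‖b k‖ ≤ ‖b k‖ ^ (p - 1) * ‖b k‖ :=
        mul_le_mul_of_nonneg_right
          (Real.rpow_le_rpow (hv k) h (by linarith)) (norm_nonneg _)
      _ = ‖b k‖ ^ p := rpow_pred_mul_self hp (norm_nonneg _)
      _ ≤ v k ^ p + ‖b k‖ ^ p := le_add_of_nonneg_left (Real.rpow_nonneg (hv k) _)

lemma summable_dcoef_mul (hp : 1 < p) {a b : ℕ → ℂ} (ha : Memlp p a) (hb : Memlp p b) :
    Summable fun k => dcoef p (a k) * b k :=
  summable_mul_norms hp (fun k => norm_nonneg (a k)) ha hb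
    (fun k => le_of_eq (norm_dcoef_mul hp _ _))

lemma orth_of_D_eq_zero (hp : 1 < p) {a b : ℕ → ℂ} (ha : Memlp p a) (hb : Memlp p b)
    (hD : Dfun p a b = 0) : ∀ β : ℂ, pnorm p a ≤ pnorm p fun k => a k + β * b k := by
  intro β
  have hp0 : 0 < p := by linarith
  have hsum1 : Memlp p (fun k => a k + β * b k) := memlp_add hp ha (memlp_smul β hb)
  have hDsum : Summable fun k => dcoef p (a k) * b k := summable_dcoef_mul hp ha hb
  have hDsum' : Summable fun k => dcoef p (a k) * (β * b k) := by
    refine Summable.congr (hDsum.mul_left β) fun k => by ring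
  have hresum : Summable fun k => (dcoef p (a k) * (β * b k)).re :=
    (Complex.hasSum_re hDsum'.hasSum).summable
  have hkey : ∀ k, ‖a k‖ ^ p + p * (dcoef p (a k) * (β * b k)).re ≤ ‖a k + β * b k‖ ^ p :=
    fun k => key_lower hp (a k) (β * b k)
  have hsum2 : Summable fun k => ‖a k‖ ^ p + p * (dcoef p (a k) * (β * b k)).re :=
    ha.add (hresum.mul_left p)
  have h1 : ∑' k, (‖a k‖ ^ p + p * (dcoef p (a k) * (β * b k)).re)
      ≤ ∑' k, ‖a k + β * b k‖ ^ p := Summable.tsum_le_tsum hkey hsum2 hsum1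
  have h2 : ∑' k, (‖a k‖ ^ p + p * (dcoef p (a k) * (β * b k)).re)
      = ∑' k, ‖a k‖ ^ p := by
    have hD' : ∑' k, dcoef p (a k) * b k = 0 := hD
    rw [Summable.tsum_add ha (hresum.mul_left p), tsum_mul_left, ← Complex.re_tsum hDsum',
      show ∑' k, dcoef p (a k) * (β * b k) = β * ∑' k, dcoef p (a k) * b k by
        rw [← tsum_mul_left]; exact tsum_congr fun k => by ring,
      hD', mul_zero, Complex.zero_re, mul_zero, add_zero]
  exact pnorm_le_pnorm hp0 (by rw [← h2]; exact h1)

lemma summable_rpow_pred_mul (hp : 1 < p) {v w : ℕ → ℝ} (hv : ∀ k, 0 ≤ v k) (hw : ∀ k, 0 ≤ w k)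
    (hvs : Summable fun k => v k ^ p) (hws : Summable fun k => w k ^ p) :
    Summable fun k => v k ^ (p - 1) * w k := by
  refine Summable.of_nonneg_of_le
    (fun k => mul_nonneg (Real.rpow_nonneg (hv k) _) (hw k)) (fun k => ?_) (hvs.add hws)
  rcases le_total (w k) (v k) with h | h
  · calc v k ^ (p - 1) * w k ≤ v k ^ (p - 1) * v k :=
        mul_le_mul_of_nonneg_left h (Real.rpow_nonneg (hv k) _)
      _ = v k ^ p := rpow_pred_mul_self hp (hv k)
      _ ≤ v k ^ p + w k ^ p := le_add_of_nonneg_right (Real.rpow_nonneg (hw k) _)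
  · calc v k ^ (p - 1) * w k ≤ w k ^ (p - 1) * w k :=
        mul_le_mul_of_nonneg_right (Real.rpow_le_rpow (hv k) h (by linarith)) (hw k)
      _ = w k ^ p := rpow_pred_mul_self hp (hw k)
      _ ≤ v k ^ p + w k ^ p := le_add_of_nonneg_left (Real.rpow_nonneg (hv k) _)

lemma re_D_nonneg (hp : 1 < p) {a b : ℕ → ℂ} (ha : Memlp p a) (hb : Memlp p b)
    (h : ∀ t : ℝ, 0 < t → t ≤ 1 →
      ∑' k, ‖a k‖ ^ p ≤ ∑' k, ‖a k + (t : ℂ) * b k‖ ^ p) :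
    0 ≤ (Dfun p a b).re := by
  have hp0 : 0 < p := by linarith
  set D : ℝ → ℕ → ℂ := fun t k => dcoef p (a k + (t : ℂ) * b k) * b k with hD
  have hvb : Summable fun k => (‖a k‖ + ‖b k‖) ^ p := summable_norm_add_rpow hp ha hb
  have hbound : ∀ t : ℝ, 0 ≤ t → t ≤ 1 → ∀ k,
      ‖D t k‖ ≤ (‖a k‖ + ‖b k‖) ^ (p - 1) * ‖b k‖ := by
    intro t h0 h1 k
    rw [hD]
    simp only []
    rw [norm_dcoef_mul hp]
    refine mul_le_mul_of_nonneg_right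
      (Real.rpow_le_rpow (norm_nonneg _) ?_ (by linarith)) (norm_nonneg _)
    calc ‖a k + (t : ℂ) * b k‖ ≤ ‖a k‖ + ‖(t : ℂ) * b k‖ := norm_add_le _ _
      _ ≤ ‖a k‖ + ‖b k‖ := by
          rw [norm_mul, Complex.norm_real, Real.norm_eq_abs, _root_.abs_of_nonneg h0]
          nlinarith [norm_nonneg (b k)]
  have hDsum : ∀ t : ℝ, 0 ≤ t → t ≤ 1 → Summable (D t) := fun t h0 h1 =>
    summable_mul_norms hp (fun k => add_nonneg (norm_nonneg _) (norm_nonneg _))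
      hvb hb (hbound t h0 h1)
  -- Step 1: positivity of the perturbed pairing
  have step1 : ∀ t : ℝ, 0 < t → t ≤ 1 → 0 ≤ (∑' k, D t k).re := by
    intro t ht0 ht1
    have hsD := hDsum t ht0.le ht1
    have hre : Summable fun k => (D t k).re := (Complex.hasSum_re hsD.hasSum).summable
    have hat : Memlp p (fun k => a k + (t : ℂ) * b k) := memlp_add hp ha (memlp_smul _ hb)
    have hkey : ∀ k, ‖a k + (t : ℂ) * b k‖ ^ p ≤ ‖a k‖ ^ p + (p * t) * (D t k).re := by
      intro k
      have hk := key_lower hp (a k + (t : ℂ) * b k) (-((t : ℂ) * b k))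
      rw [show a k + (t : ℂ) * b k + -((t : ℂ) * b k) = a k by ring] at hk
      have hrw : (dcoef p (a k + (t : ℂ) * b k) * -((t : ℂ) * b k)).re
          = -(t * (D t k).re) := by
        rw [show dcoef p (a k + (t : ℂ) * b k) * -((t : ℂ) * b k)
            = -((t : ℂ) * D t k) by rw [hD]; ring]
        rw [Complex.neg_re, Complex.re_ofReal_mul]
      rw [hrw] at hk
      nlinarith [hk]
    have h1 : ∑' k, ‖a k + (t : ℂ) * b k‖ ^ p
        ≤ ∑' k, (‖a k‖ ^ p + (p * t) * (D t k).re) :=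
      Summable.tsum_le_tsum hkey hat (ha.add (hre.mul_left _))
    have h2 := h t ht0 ht1
    rw [Summable.tsum_add ha (hre.mul_left _), tsum_mul_left] at h1
    have h3 : 0 ≤ (p * t) * ∑' k, (D t k).re := by linarith
    have h4 : 0 ≤ ∑' k, (D t k).re :=
      nonneg_of_mul_nonneg_right h3 (by positivity)
    rw [Complex.re_tsum hsD]
    exact h4
  -- Step 2: pass to the limit
  set t : ℕ → ℝ := fun n => ((n : ℝ) + 1)⁻¹ with htdef
  have ht0 : ∀ n, 0 < t n := fun n => by positivity
  have ht1 : ∀ n, t n ≤ 1 := fun n => inv_le_one_of_one_le₀ (by exact_mod_cast Nat.le_add_left 1 n)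
  have htend : Tendsto t atTop (𝓝 0) := by
    have := tendsto_one_div_add_atTop_nhds_zero_nat (𝕜 := ℝ)
    simpa [htdef, one_div] using this
  have hconv : ∀ k, Tendsto (fun n => D (t n) k) atTop (𝓝 (dcoef p (a k) * b k)) := by
    intro k
    have htendC : Tendsto (fun n => ((t n : ℝ) : ℂ)) atTop (𝓝 (0 : ℂ)) := by
      have := (Complex.continuous_ofReal.tendsto 0).comp htend
      simpa [Function.comp_def] using this
    have hz : Tendsto (fun n => a k + ((t n : ℝ) : ℂ) * b k) atTop (𝓝 (a k)) := by
      have h6 : Tendsto (fun n : ℕ => a k + (t n : ℂ) * b k) atTop (𝓝 (a k + 0 * b k)) :=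
        Tendsto.add (tendsto_const_nhds (x := a k)) (htendC.mul tendsto_const_nhds)
      simpa using h6
    rcases eq_or_ne (a k) 0 with hak | hak
    · have hzero : dcoef p (a k) * b k = 0 := by
        rw [hak, dcoef]
        simp
      rw [hzero]
      have hnorm_eq : ∀ n, ‖D (t n) k‖ = t n ^ (p - 1) * (‖b k‖ ^ (p - 1) * ‖b k‖) := by
        intro n
        rw [hD]
        simp only []
        rw [hak, zero_add, norm_dcoef_mul hp, norm_mul, Complex.norm_real,
          Real.norm_eq_abs, _root_.abs_of_nonneg (ht0 n).le,
          Real.mul_rpow (ht0 n).le (norm_nonneg _), mul_assoc]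
      have hgl : Tendsto (fun n => t n ^ (p - 1) * (‖b k‖ ^ (p - 1) * ‖b k‖))
          atTop (𝓝 0) := by
        have h5 : Tendsto (fun n => t n ^ (p - 1)) atTop (𝓝 ((0:ℝ) ^ (p - 1))) :=
          ((Real.continuousAt_rpow_const 0 (p - 1) (Or.inr (by linarith))).tendsto).comp htend
        rw [Real.zero_rpow (show p - 1 ≠ 0 by intro h'; linarith [sub_eq_zero.mp h'])] at h5
        simpa using h5.mul_const (‖b k‖ ^ (p - 1) * ‖b k‖)
      exact squeeze_zero_norm (fun n => le_of_eq (hnorm_eq n)) hgl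
    · have hcont : ContinuousAt (fun z : ℂ => dcoef p z * b k) (a k) := by
        have h1 : ContinuousAt (fun z : ℂ => ‖z‖ ^ (p - 2)) (a k) :=
          (Real.continuousAt_rpow_const ‖a k‖ (p - 2)
            (Or.inl (norm_ne_zero_iff.mpr hak))).comp continuous_norm.continuousAt
        exact ((Complex.continuous_ofReal.continuousAt.comp h1).mul
          (continuous_star.continuousAt)).mul continuousAt_const
      exact (hcont.tendsto).comp hz
  have hboundsum : Summable fun k => (‖a k‖ + ‖b k‖) ^ (p - 1) * ‖b k‖ :=
    summable_rpow_pred_mul hp (fun k => add_nonneg (norm_nonneg _) (norm_nonneg _))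
      (fun k => norm_nonneg _) hvb hb
  have hlim : Tendsto (fun n => ∑' k, D (t n) k) atTop (𝓝 (∑' k, dcoef p (a k) * b k)) :=
    tendsto_tsum_of_dominated_convergence hboundsum hconv
      (Eventually.of_forall fun n k => hbound (t n) (ht0 n).le (ht1 n) k)
  have hlimre : Tendsto (fun n => (∑' k, D (t n) k).re) atTop (𝓝 (Dfun p a b).re) :=
    (Complex.continuous_re.tendsto _).comp hlim
  exact ge_of_tendsto' hlimre fun n => step1 (t n) (ht0 n) (ht1 n)

lemma D_eq_zero_of_orth (hp : 1 < p) {a b : ℕ → ℂ} (ha : Memlp p a) (hb : Memlp p b)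
    (h : ∀ β : ℂ, pnorm p a ≤ pnorm p fun k => a k + β * b k) : Dfun p a b = 0 := by
  have hp0 : 0 < p := by linarith
  have hmain : ∀ β : ℂ, 0 ≤ (β * Dfun p a b).re := by
    intro β
    have hb' : Memlp p (fun k => β * b k) := memlp_smul β hb
    have hDeq : Dfun p a (fun k => β * b k) = β * Dfun p a b := by
      rw [Dfun, Dfun, ← tsum_mul_left]
      exact tsum_congr fun k => by ring
    have hre := re_D_nonneg hp ha hb' (fun t ht0 ht1 => by
      have horth := tsum_le_tsum_of_pnorm_le hp0 (h ((t : ℂ) * β))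
      refine le_trans horth (le_of_eq (tsum_congr fun k => ?_))
      rw [show a k + ((t : ℂ) * β) * b k = a k + (t : ℂ) * (β * b k) by ring])
    rwa [hDeq] at hre
  have h1 := hmain (-(starRingEnd ℂ (Dfun p a b)))
  rw [show -(starRingEnd ℂ (Dfun p a b)) * Dfun p a b
      = -((Complex.normSq (Dfun p a b) : ℝ) : ℂ) by
    rw [neg_mul, mul_comm, Complex.mul_conj]] at h1
  rw [Complex.neg_re, Complex.ofReal_re] at h1
  have h2 : Complex.normSq (Dfun p a b) = 0 :=
    le_antisymm (by linarith) (Complex.normSq_nonneg _)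
  exact Complex.normSq_eq_zero.mp h2

theorem coprojection_is_p_inner (p : ℝ) (hp : 1 < p)
    (f : ℕ → ℂ) (hf : Memlp p f) (hf0 : f ≠ 0)
    (fhat : ℕ → ℂ) (hfhatmem : Memlp p fhat) (hfhatSpan : inSpanSf p f fhat)
    (hfhatMin : ∀ g : ℕ → ℂ, Memlp p g → inSpanSf p f g →
      pnorm p (fun k => f k - fhat k) ≤ pnorm p (fun k => f k - g k)) :
    ((fun k => f k - fhat k) ≠ 0 ∧
      ∀ n : ℕ, 1 ≤ n →
        orth p (fun k => f k - fhat k) (shiftn n fun k => f k - fhat k)) ∧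
    (∀ J : ℕ → ℂ, Memlp p J → J ≠ 0 →
      (∀ n : ℕ, 1 ≤ n → orth p J (shiftn n J)) →
      ∀ g : ℕ → ℂ, Memlp p g → inSpanSf p J g →
        pnorm p J ≤ pnorm p fun k => J k - g k) := by
  have hp0 : 0 < p := by linarith
  constructor
  · set J : ℕ → ℂ := fun k => f k - fhat k with hJdef
    have hJmem : Memlp p J := memlp_sub hp hf hfhatmem
    constructor
    · -- J ≠ 0
      intro hJ0
      have hfe : ∀ k, fhat k = f k := fun k => by
        have h := congrFun hJ0 k
        simp only [Pi.zero_apply] at h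
        exact (sub_eq_zero.mp h).symm
      have hex : ∃ m, f m ≠ 0 := Function.ne_iff.mp hf0
      set m₀ := Nat.find hex with hm₀def
      have hm₀ : f m₀ ≠ 0 := Nat.find_spec hex
      have hmin : ∀ j, j < m₀ → f j = 0 := fun j hj => by
        by_contra hj0; exact (Nat.find_min hex hj) hj0
      obtain ⟨N, c, hNc⟩ := hfhatSpan ‖f m₀‖ (norm_pos_iff.mpr hm₀)
      set C : ℕ → ℂ := combo f N c with hCdef
      have hCm0 : C m₀ = 0 := by
        refine Finset.sum_eq_zero fun k hk => ?_
        rw [shiftn]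
        by_cases hc : m₀ < k + 1
        · rw [if_pos hc, mul_zero]
        · rw [if_neg hc, hmin _ (by omega), mul_zero]
      have hCmem : Memlp p C := memlp_combo hp hf N c
      have hsub : Memlp p (fun m => fhat m - C m) := memlp_sub hp hfhatmem hCmem
      have hge : ‖f m₀‖ ≤ pnorm p (fun m => fhat m - C m) := by
        have h1 : ‖fhat m₀ - C m₀‖ ^ p ≤ ∑' m, ‖fhat m - C m‖ ^ p :=
          Summable.le_tsum hsub m₀ (fun j _ => by positivity)
        have h2 : ‖fhat m₀ - C m₀‖ = ‖f m₀‖ := by rw [hCm0, hfe, sub_zero]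
        calc ‖f m₀‖ = (‖f m₀‖ ^ p) ^ (1/p) := by
              rw [← Real.rpow_mul (norm_nonneg _), mul_one_div, div_self hp0.ne',
                Real.rpow_one]
          _ ≤ pnorm p (fun m => fhat m - C m) :=
              Real.rpow_le_rpow (by positivity) (h2 ▸ h1) (by positivity)
      have hlt : pnorm p (fun m => fhat m - C m) < ‖f m₀‖ := hNc
      exact absurd (lt_of_le_of_lt hge hlt) (lt_irrefl _)
    · -- orthogonality
      intro n hn β
      set g : ℕ → ℂ := fun m => fhat m - β * shiftn n J m with hgdef
      have hshiftJ : Memlp p (shiftn n J) := memlp_shiftn n hJmem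
      have hgmem : Memlp p g := memlp_sub hp hfhatmem (memlp_smul β hshiftJ)
      have hgspan : inSpanSf p f g := by
        intro ε hε
        have hβ : (0:ℝ) < 1 + ‖β‖ := by positivity
        obtain ⟨N, c, hNc⟩ := hfhatSpan (ε / (1 + ‖β‖)) (by positivity)
        set C : ℕ → ℂ := combo f N c with hCdef
        have hNc2 : pnorm p (fun m => fhat m - C m) < ε / (1 + ‖β‖) := hNc
        have hcombo1 : IsCombo f (fun m => C m + (-β) * shiftn n f m) :=
          isCombo_add_smul (-β) ⟨N, c, rfl⟩ (isCombo_shift_self hn)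
        have hcombo2 : IsCombo f
            (fun m => (C m + (-β) * shiftn n f m) + β * shiftn n C m) :=
          isCombo_add_smul β hcombo1 (isCombo_shiftn n ⟨N, c, rfl⟩)
        obtain ⟨N', c', hC'⟩ := hcombo2
        refine ⟨N', c', ?_⟩
        have hmem1 : Memlp p (fun k => fhat k - C k) := memlp_sub hp hfhatmem
          (memlp_combo hp hf N c)
        have hmem2 : Memlp p (fun m => β * shiftn n (fun k => fhat k - C k) m) :=
          memlp_smul β (memlp_shiftn n hmem1)
        have hptw : ∀ m, g m - combo f N' c' m
            = (fhat m - C m) + β * shiftn n (fun k => fhat k - C k) m := by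
          intro m
          have h5 : combo f N' c' m
              = (C m + (-β) * shiftn n f m) + β * shiftn n C m := (congrFun hC' m).symm
          have hJm : shiftn n J m = shiftn n f m - shiftn n fhat m := shiftn_sub n f fhat m
          rw [h5, shiftn_sub]
          simp only [hgdef]
          rw [hJm]
          ring
        have htri := pnorm_triangle hp hptw hmem1 hmem2
        have hsmul : pnorm p (fun m => β * shiftn n (fun k => fhat k - C k) m)
            = ‖β‖ * pnorm p (fun k => fhat k - C k) := by
          rw [pnorm_smul hp0, pnorm_shiftn hp0 n hmem1]
        calc pnorm p (fun m => g m - combo f N' c' m)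
            ≤ pnorm p (fun k => fhat k - C k)
              + pnorm p (fun m => β * shiftn n (fun k => fhat k - C k) m) := htri
          _ = (1 + ‖β‖) * pnorm p (fun k => fhat k - C k) := by rw [hsmul]; ring
          _ < (1 + ‖β‖) * (ε / (1 + ‖β‖)) := by
              exact mul_lt_mul_of_pos_left hNc2 hβ
          _ = ε := by field_simp
      have hminr := hfhatMin g hgmem hgspan
      have heq : pnorm p (fun k => f k - g k)
          = pnorm p (fun k => J k + β * shiftn n J k) :=
        pnorm_congr fun k => by simp only [hgdef, hJdef]; ring
      rw [heq] at hminr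
      exact hminr
  · -- part 2
    intro J hJ hJ0 horth g hg hspan
    refine le_of_forall_pos_le_add fun ε hε => ?_
    obtain ⟨N, c, hNc⟩ := hspan ε hε
    set C : ℕ → ℂ := combo J N c with hCdef
    have hNc' : pnorm p (fun k => g k - C k) < ε := hNc
    have hCmem : Memlp p C := memlp_combo hp hJ N c
    have hDzero : ∀ n, 1 ≤ n → Dfun p J (shiftn n J) = 0 := fun n hn =>
      D_eq_zero_of_orth hp hJ (memlp_shiftn n hJ) (horth n hn)
    have hDC : Dfun p J C = 0 := by
      rw [Dfun]
      have hsw : ∀ m, dcoef p (J m) * C m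
          = ∑ k ∈ Finset.range N, c k * (dcoef p (J m) * shiftn (k+1) J m) := by
        intro m
        rw [hCdef, combo, Finset.mul_sum]
        exact Finset.sum_congr rfl fun k _ => by ring
      rw [tsum_congr hsw, Summable.tsum_finsetSum (fun k _ =>
        Summable.mul_left _ (summable_dcoef_mul hp hJ (memlp_shiftn (k+1) hJ)))]
      refine Finset.sum_eq_zero fun k _ => ?_
      rw [tsum_mul_left]
      have hz := hDzero (k+1) (Nat.le_add_left 1 k)
      rw [Dfun] at hz
      rw [hz, mul_zero]
    have horthC := orth_of_D_eq_zero hp hJ hCmem hDC (-1)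
    have h1 : pnorm p J ≤ pnorm p (fun k => J k - C k) :=
      horthC.trans (le_of_eq (pnorm_congr fun k => by ring))
    have hJg : Memlp p (fun k => J k - g k) := memlp_sub hp hJ hg
    have hgC : Memlp p (fun k => g k - C k) := memlp_sub hp hg hCmem
    have htri : pnorm p (fun k => J k - C k)
        ≤ pnorm p (fun k => J k - g k) + pnorm p (fun k => g k - C k) :=
      pnorm_triangle hp (fun k => by ring) hJg hgC
    linarith [h1, htri, hNc']
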